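/- arXiv:2310.06301 — 3 statements merged into one kernel-verified Lean document; each statement's English description precedes it below -/
import Mathlib

section
/- Define $F = 1 + 2\cos^2(2\pi/5)$, $G = 1 + 2\cos(2\pi/5)$, $H = 1 + 2/\cos(2\pi/5)$, $M = 3$. Then the system of equations $x^6 G + x^2 y^2 H + 2 x^4 y M + y^2 - x^4 = 0$ and $2 x^8 F + 3 x^6 y G - x^2 y^3 H - 2 x^6 - 2 y^3 = 0$ has a solution $(x, y)$ with $x > 0$, $y < 0$, and $-x^2 \cos(2\pi/5) < y$. -/
set_option maxHeartbeats 1000000 in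
open Real in
theorem five_gon_system_has_solution :
    ∃ x y : ℝ, 0 < x ∧ y < 0 ∧ -x ^ 2 * Real.cos (2 * π / 5) < y ∧
      x ^ 6 * (1 + 2 * Real.cos (2 * π / 5)) + x ^ 2 * y ^ 2 * (1 + 2 / Real.cos (2 * π / 5))
        + 2 * x ^ 4 * y * 3 + y ^ 2 - x ^ 4 = 0 ∧
      2 * x ^ 8 * (1 + 2 * Real.cos (2 * π / 5) ^ 2) + 3 * x ^ 6 * y * (1 + 2 * Real.cos (2 * π / 5))
        - x ^ 2 * y ^ 3 * (1 + 2 / Real.cos (2 * π / 5)) - 2 * x ^ 6 - 2 * y ^ 3 = 0 := by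
  set s : ℝ := Real.sqrt 5 with hs_def
  have hs0 : (0:ℝ) ≤ s := Real.sqrt_nonneg 5
  have hs2 : s ^ 2 = 5 := Real.sq_sqrt (by norm_num)
  have hs_lb : 2 < s := by nlinarith
  have hs_ub : s < 5/2 := by nlinarith
  -- cos (2π/5) = (s - 1)/4
  have hc : Real.cos (2 * π / 5) = (s - 1) / 4 := by
    have h1 : 2 * π / 5 = 2 * (π / 5) := by ring
    rw [h1, Real.cos_two_mul, Real.cos_pi_div_five]
    nlinarith
  -- constants
  set F : ℝ := (7 - s) / 4 with hF_def
  set G : ℝ := (s + 1) / 2 with hG_def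
  set H : ℝ := 2 * s + 3 with hH_def
  have hG : 1 + 2 * ((s - 1) / 4) = G := by rw [hG_def]; ring
  have hF : 1 + 2 * ((s - 1) / 4) ^ 2 = F := by rw [hF_def]; linear_combination hs2 / 8
  have hs1ne : s - 1 ≠ 0 := by nlinarith
  have hH : 1 + 2 / ((s - 1) / 4) = H := by
    rw [hH_def]; field_simp; nlinarith
  -- the one-variable polynomial
  set f : ℝ → ℝ := fun t => (1 - t ^ 2) * (2 * F + 3 * t * G - t ^ 3 * H)
      - 2 * (1 + t ^ 3) * (G + t ^ 2 * H + 6 * t) with hf_def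
  have hcont : Continuous f := by fun_prop
  have hfa : 0 < f (-(1:ℝ)/4) := by
    simp only [hf_def, hF_def, hG_def, hH_def]
    nlinarith
  have hfb : f (-(1:ℝ)/8) < 0 := by
    simp only [hf_def, hF_def, hG_def, hH_def]
    nlinarith
  have hab : (-(1:ℝ)/4) ≤ (-(1:ℝ)/8) := by norm_num
  obtain ⟨t, ht, hft⟩ := intermediate_value_Icc' hab hcont.continuousOn
    (Set.mem_Icc.mpr ⟨hfb.le, hfa.le⟩)
  have ht1 : -(1:ℝ)/4 ≤ t := ht.1
  have ht2 : t ≤ -(1:ℝ)/8 := ht.2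
  -- D1 > 0
  set D1 : ℝ := G + t ^ 2 * H + 6 * t with hD1_def
  have hD1 : 0 < D1 := by
    rw [hD1_def, hG_def, hH_def]
    nlinarith [sq_nonneg ((2*s+3)*t + 3)]
  set u : ℝ := (1 - t ^ 2) / D1 with hu_def
  have ht_sq : t ^ 2 < 1 := by nlinarith
  have hu_pos : 0 < u := div_pos (by nlinarith) hD1
  have hu1 : u * D1 = 1 - t ^ 2 := div_mul_cancel₀ _ hD1.ne'
  set D2 : ℝ := 2 * F + 3 * t * G - t ^ 3 * H with hD2_def
  have h1 : u * D2 * D1 = 2 * (1 + t ^ 3) * D1 := by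
    have hft' : (1 - t ^ 2) * D2 - 2 * (1 + t ^ 3) * D1 = 0 := hft
    linear_combination D2 * hu1 + hft'
  have hu2 : u * D2 = 2 * (1 + t ^ 3) := mul_right_cancel₀ hD1.ne' h1
  refine ⟨Real.sqrt u, t * u, Real.sqrt_pos.mpr hu_pos, ?_, ?_, ?_, ?_⟩
  · exact mul_neg_of_neg_of_pos (by linarith) hu_pos
  · rw [hc, Real.sq_sqrt hu_pos.le]
    nlinarith
  · rw [hc, hG, hH]
    have hx2 : Real.sqrt u ^ 2 = u := Real.sq_sqrt hu_pos.le
    have hx4 : Real.sqrt u ^ 4 = u ^ 2 := by rw [show Real.sqrt u ^ 4 = (Real.sqrt u ^ 2) ^ 2 by ring, hx2]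
    have hx6 : Real.sqrt u ^ 6 = u ^ 3 := by rw [show Real.sqrt u ^ 6 = (Real.sqrt u ^ 2) ^ 3 by ring, hx2]
    rw [hx2, hx4, hx6]
    linear_combination u ^ 2 * hu1
  · rw [hc, hG, hH, hF]
    have hx2 : Real.sqrt u ^ 2 = u := Real.sq_sqrt hu_pos.le
    have hx6 : Real.sqrt u ^ 6 = u ^ 3 := by rw [show Real.sqrt u ^ 6 = (Real.sqrt u ^ 2) ^ 3 by ring, hx2]
    have hx8 : Real.sqrt u ^ 8 = u ^ 4 := by rw [show Real.sqrt u ^ 8 = (Real.sqrt u ^ 2) ^ 4 by ring, hx2]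
    rw [hx2, hx6, hx8]
    linear_combination u ^ 3 * hu2
end

section
/- Define $F = 1 + 2\cos^2(\pi/3) = 3/2$, $G = 1 + 2\cos(\pi/3) = 2$, $H = 1 + 2/\cos(\pi/3) = 5$, $M = 3$. Then the system $x^6 G + x^2 y^2 H + 2 x^4 y M + y^2 - x^4 = 0$ and $2 x^8 F + 3 x^6 y G - x^2 y^3 H - 2 x^6 - 2 y^3 = 0$, i.e. $2x^6 + 5 x^2 y^2 + 6 x^4 y + y^2 - x^4 = 0$ and $3 x^8 + 6 x^6 y - 5 x^2 y^3 - 2 x^6 - 2 y^3 = 0$, has a solution $(x,y)$ with $x > 0$, $y < 0$, and $-x^2/2 < y$. -/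
/-!
Substituting `y = t x²` makes both equations linear in `x²`: the second reads
`x² (3 + 6t - 5t³) = 2 + 2t³` and the first `x² (2 + 6t + 5t²) = 1 - t²`.
Eliminating `x²`, the two are compatible exactly when `(1 + t) (5t⁴ + 7t³ + 8t² + 5t + 1) = 0`,
and this quartic changes sign on `(-1/2, 0)`, where also both right-hand sides are positive.
-/

open Set

lemma exists_root_resolvent_mem_Ioo :
    ∃ t ∈ Ioo (-1 / 2 : ℝ) 0, 5 * t ^ 4 + 7 * t ^ 3 + 8 * t ^ 2 + 5 * t + 1 = 0 := by
  have hcont : ContinuousOn (fun t : ℝ => 5 * t ^ 4 + 7 * t ^ 3 + 8 * t ^ 2 + 5 * t + 1)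
      (Icc (-1 / 2) 0) := by fun_prop
  exact intermediate_value_Ioo (by norm_num) hcont (show (0 : ℝ) ∈ Ioo _ _ by norm_num)

lemma exists_pos_sq_mul_eq {a b : ℝ} (ha : 0 < a) (hb : 0 < b) : ∃ x : ℝ, 0 < x ∧ x ^ 2 * b = a :=
  ⟨√(a / b), Real.sqrt_pos.mpr (div_pos ha hb), by
    rw [Real.sq_sqrt (div_pos ha hb).le, div_mul_cancel₀ a hb.ne']⟩

lemma six_gon_equations_of_resolvent_root {x t : ℝ}
    (hroot : 5 * t ^ 4 + 7 * t ^ 3 + 8 * t ^ 2 + 5 * t + 1 = 0)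
    (hD : 3 + 6 * t - 5 * t ^ 3 ≠ 0) (hx : x ^ 2 * (3 + 6 * t - 5 * t ^ 3) = 2 + 2 * t ^ 3) :
    2 * x ^ 6 + 5 * x ^ 2 * (t * x ^ 2) ^ 2 + 6 * x ^ 4 * (t * x ^ 2) + (t * x ^ 2) ^ 2 - x ^ 4 = 0 ∧
      3 * x ^ 8 + 6 * x ^ 6 * (t * x ^ 2) - 5 * x ^ 2 * (t * x ^ 2) ^ 3 - 2 * x ^ 6
        - 2 * (t * x ^ 2) ^ 3 = 0 := by
  refine ⟨?_, by linear_combination x ^ 6 * hx⟩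
  refine (mul_eq_zero.mp ?_).resolve_right hD
  linear_combination (x ^ 4 * (2 + 6 * t + 5 * t ^ 2)) * hx + (x ^ 4 * (1 + t)) * hroot

theorem six_gon_system_has_solution :
    ∃ x y : ℝ, 0 < x ∧ y < 0 ∧ -x ^ 2 / 2 < y ∧
      2 * x ^ 6 + 5 * x ^ 2 * y ^ 2 + 6 * x ^ 4 * y + y ^ 2 - x ^ 4 = 0 ∧
      3 * x ^ 8 + 6 * x ^ 6 * y - 5 * x ^ 2 * y ^ 3 - 2 * x ^ 6 - 2 * y ^ 3 = 0 := by
  obtain ⟨t, ⟨ht_gt, ht_lt⟩, hroot⟩ := exists_root_resolvent_mem_Ioo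
  have hD : 0 < 3 + 6 * t - 5 * t ^ 3 := by nlinarith [pow_pos (neg_pos.mpr ht_lt) 3]
  have hN : 0 < 2 + 2 * t ^ 3 := by nlinarith [pow_pos (neg_pos.mpr ht_lt) 3]
  obtain ⟨x, hx_pos, hx⟩ := exists_pos_sq_mul_eq hN hD
  have hx_sq : 0 < x ^ 2 := by positivity
  obtain ⟨heq₁, heq₂⟩ := six_gon_equations_of_resolvent_root hroot hD.ne' hx
  exact ⟨x, t * x ^ 2, hx_pos, mul_neg_of_neg_of_pos ht_lt hx_sq,
    by nlinarith [mul_lt_mul_of_pos_right ht_gt hx_sq], heq₁, heq₂⟩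
end

section
/- Fix an integer $c \ge 4$ and set $\alpha = 2\pi/c$, $s$ the unique integer with $c/4 - 1 \le s < c/4$, and define $F(s) = 1 + 2\sum_{j=1}^{s}\cos^2(j\alpha)$, $G(s) = 1 + 2\sum_{j=1}^{s}\cos(j\alpha)$, $H(s) = 1 + 2\sum_{j=1}^{s} \sec(j\alpha)$, $M(s) = 1 + 2s$. Then for $c = 8$ (so $s = 1$, $\alpha = \pi/4$), the system $x^6 G + x^2 y^2 H + 2 x^4 y M + y^2 - x^4 = 0$, $2x^8 F + 3 x^6 y G - x^2 y^3 H - 2x^6 - 2y^3 = 0$ has a solution with $x > 0$, $y < 0$ and $-x^2 \cos(\pi/4) < y$. -/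
/-! Substituting `y = t x²` makes both equations homogeneous in `x`: after dividing by powers of `x`
they say `x² (G + 2 M t + H t²) = 1 - t²` and `x² (2 F + 3 G t - H t³) = 2 (1 + t³)`. Eliminating `x²`
leaves a quintic in `t`, which for the octagon's constants changes sign on `[-0.55, -0.53]`; its root
there gives `x² > 0` and satisfies `-cos (π / 4) < t < 0`. -/

open Real Set

def tmsQuintic (F G H M t : ℝ) : ℝ :=
  (1 - t ^ 2) * (2 * F + 3 * G * t - H * t ^ 3) - 2 * (1 + t ^ 3) * (G + 2 * M * t + H * t ^ 2)

theorem exists_solution_of_tmsQuintic_eq_zero {F G H M c t : ℝ} (hP : tmsQuintic F G H M t = 0)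
    (hD : 0 < G + 2 * M * t + H * t ^ 2) (ht : t ^ 2 < 1) (hct : -c < t) (ht0 : t < 0) :
    ∃ x y : ℝ, 0 < x ∧ y < 0 ∧ -x ^ 2 * c < y ∧
      x ^ 6 * G + x ^ 2 * y ^ 2 * H + 2 * x ^ 4 * y * M + y ^ 2 - x ^ 4 = 0 ∧
      2 * x ^ 8 * F + 3 * x ^ 6 * y * G - x ^ 2 * y ^ 3 * H - 2 * x ^ 6 - 2 * y ^ 3 = 0 := by
  set D := G + 2 * M * t + H * t ^ 2
  have hX : 0 < (1 - t ^ 2) / D := div_pos (by linarith) hD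
  set x := √((1 - t ^ 2) / D)
  have hx : 0 < x := sqrt_pos.mpr hX
  have hx2 : x ^ 2 * D = 1 - t ^ 2 := by
    rw [sq_sqrt hX.le, div_mul_cancel₀ _ hD.ne']
  have hx2' : x ^ 2 * (2 * F + 3 * G * t - H * t ^ 3) = 2 * (1 + t ^ 3) := by
    refine mul_right_cancel₀ hD.ne' ?_
    unfold tmsQuintic at hP
    linear_combination (2 * F + 3 * G * t - H * t ^ 3) * hx2 + hP
  have hxsq : 0 < x ^ 2 := by positivity
  refine ⟨x, t * x ^ 2, hx, mul_neg_of_neg_of_pos ht0 hxsq, by nlinarith, ?_, ?_⟩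
  · linear_combination x ^ 4 * hx2
  · linear_combination x ^ 6 * hx2'

theorem exists_tmsQuintic_octagon_eq_zero :
    ∃ t ∈ Icc (-0.55 : ℝ) (-0.53), tmsQuintic 2 (1 + √2) (1 + 2 * √2) 3 t = 0 := by
  have hs : √2 ^ 2 = 2 := sq_sqrt (by norm_num)
  have hsl : (1.414 : ℝ) < √2 := by nlinarith [sqrt_nonneg 2]
  have hsu : √2 < 1.4143 := by nlinarith [sqrt_nonneg 2]
  refine intermediate_value_Icc' (by norm_num) (by unfold tmsQuintic; fun_prop) ⟨?_, ?_⟩ <;>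
    norm_num [tmsQuintic] <;> nlinarith

open Real in
theorem eight_gon_system_has_solution :
    ∃ x y : ℝ, 0 < x ∧ y < 0 ∧ -x ^ 2 * Real.cos (π / 4) < y ∧
      x ^ 6 * (1 + 2 * Real.cos (π / 4)) + x ^ 2 * y ^ 2 * (1 + 2 / Real.cos (π / 4))
        + 2 * x ^ 4 * y * 3 + y ^ 2 - x ^ 4 = 0 ∧
      2 * x ^ 8 * (1 + 2 * Real.cos (π / 4) ^ 2) + 3 * x ^ 6 * y * (1 + 2 * Real.cos (π / 4))
        - x ^ 2 * y ^ 3 * (1 + 2 / Real.cos (π / 4)) - 2 * x ^ 6 - 2 * y ^ 3 = 0 := by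
  have hs : √2 ^ 2 = 2 := sq_sqrt (by norm_num)
  have hsl : (1.414 : ℝ) < √2 := by nlinarith [sqrt_nonneg 2]
  have hF : 1 + 2 * cos (π / 4) ^ 2 = 2 := by rw [cos_pi_div_four]; linear_combination hs / 2
  have hG : 1 + 2 * cos (π / 4) = 1 + √2 := by rw [cos_pi_div_four]; ring
  have hH : 1 + 2 / cos (π / 4) = 1 + 2 * √2 := by
    rw [cos_pi_div_four, div_div_eq_mul_div, mul_div_assoc, div_sqrt]
  rw [hF, hG, hH]
  obtain ⟨t, ⟨ht₁, ht₂⟩, hP⟩ := exists_tmsQuintic_octagon_eq_zero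
  refine exists_solution_of_tmsQuintic_eq_zero hP (by nlinarith) (by nlinarith) ?_ (by linarith)
  rw [cos_pi_div_four]
  linarith
end
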